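/- Under the hypotheses of the previous setting, if additionally the bilinear form b satisfies the inf-sup condition (for every nonzero q ∈ Q there exists v ∈ V with b(v,q) ≠ 0), then the saddle-point problem has a unique solution (u,w) ∈ V × Q: ⟨u,v⟩ - b(v,w) = F(v) for all v ∈ V and b(u,z) = 0 for all z ∈ Q. -/

import Mathlib

/-!
The saddle-point system is a linear map `V × Q → V* × Q*` between spaces of equal finite
dimension, so it suffices to show that it is injective. If `⟪u, ·⟫ = b(·, w)` and `b(u, ·) = 0`,
then `‖u‖² = b(u, w) = 0`, and then `b(·, w) = 0` forces `w = 0` by the inf-sup condition.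
-/

open InnerProductSpace

namespace SaddlePoint

variable {V : Type*} [NormedAddCommGroup V] [InnerProductSpace ℝ V]
  {Q : Type*} [AddCommGroup Q] [Module ℝ Q]

/-- The operator `(u, w) ↦ (⟪u, ·⟫ - b(·, w), b(u, ·))` of the saddle-point system. -/
noncomputable def operator (b : V →ₗ[ℝ] Q →ₗ[ℝ] ℝ) :
    V × Q →ₗ[ℝ] Module.Dual ℝ V × Module.Dual ℝ Q :=
  (innerₗ V ∘ₗ LinearMap.fst ℝ V Q - b.flip ∘ₗ LinearMap.snd ℝ V Q).prod (b ∘ₗ LinearMap.fst ℝ V Q)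

theorem operator_apply_eq_iff (b : V →ₗ[ℝ] Q →ₗ[ℝ] ℝ) (uw : V × Q) (F : Module.Dual ℝ V)
    (G : Module.Dual ℝ Q) :
    operator b uw = (F, G) ↔ (∀ v : V, ⟪uw.1, v⟫_ℝ - b v uw.2 = F v) ∧ ∀ z : Q, b uw.1 z = G z := by
  simp [operator, Prod.ext_iff, LinearMap.ext_iff]

theorem operator_injective {b : V →ₗ[ℝ] Q →ₗ[ℝ] ℝ}
    (hinfsup : ∀ q : Q, q ≠ 0 → ∃ v : V, b v q ≠ 0) : Function.Injective (operator b) := by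
  rw [← LinearMap.ker_eq_bot, LinearMap.ker_eq_bot']
  rintro ⟨u, w⟩ h
  obtain ⟨hu, hw⟩ := (operator_apply_eq_iff b (u, w) 0 0).1 h
  simp only [LinearMap.zero_apply] at hu hw
  have hu0 : u = 0 := inner_self_eq_zero.1 (by simpa only [hw w, sub_zero] using hu u)
  subst hu0
  refine Prod.ext rfl (not_not.1 fun hw0 => ?_)
  obtain ⟨v, hv⟩ := hinfsup w hw0
  exact hv (by simpa only [inner_zero_left, zero_sub, neg_eq_zero] using hu v)

theorem operator_bijective [FiniteDimensional ℝ V] [FiniteDimensional ℝ Q]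
    {b : V →ₗ[ℝ] Q →ₗ[ℝ] ℝ} (hinfsup : ∀ q : Q, q ≠ 0 → ∃ v : V, b v q ≠ 0) :
    Function.Bijective (operator b) := by
  have hdim : Module.finrank ℝ (V × Q) = Module.finrank ℝ (Module.Dual ℝ V × Module.Dual ℝ Q) := by
    simp only [Module.finrank_prod, Subspace.dual_finrank_eq]
  have hinj := operator_injective hinfsup
  exact ⟨hinj, (LinearMap.injective_iff_surjective_of_finrank_eq_finrank hdim).1 hinj⟩

end SaddlePoint

theorem stmt_1
    {V : Type*} [NormedAddCommGroup V] [InnerProductSpace ℝ V] [FiniteDimensional ℝ V]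
    {Q : Type*} [AddCommGroup Q] [Module ℝ Q] [FiniteDimensional ℝ Q]
    (b : V →ₗ[ℝ] Q →ₗ[ℝ] ℝ) (F : V →ₗ[ℝ] ℝ)
    (hinfsup : ∀ q : Q, q ≠ 0 → ∃ v : V, b v q ≠ 0) :
    ∃! uw : V × Q,
      (∀ v : V, ⟪uw.1, v⟫_ℝ - b v uw.2 = F v) ∧ (∀ z : Q, b uw.1 z = 0) := by
  simpa only [SaddlePoint.operator_apply_eq_iff, LinearMap.zero_apply] using
    (SaddlePoint.operator_bijective hinfsup).existsUnique (F, 0)
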